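/- arXiv:1209.6315 — 2 statements merged into one kernel-verified Lean document; each statement's English description precedes it below -/
import Mathlib

section
/- Let E be a finite-dimensional real normed vector space and L_d : E × E → ℝ twice continuously differentiable. Suppose q₀*, q₁*, q₂* ∈ E satisfy the discrete Euler–Lagrange equation D₁L_d(q₁*, q₂*) + D₂L_d(q₀*, q₁*) = 0, and suppose the continuous linear map D₁₂L_d(q₁*, q₂*) : E → E*, sending v to the functional w ↦ D²L_d(q₁*, q₂*)((w,0),(0,v)), is bijective. Then there exist open neighborhoods U of (q₀*, q₁*) in E × E and V of q₂* in E, and a continuously differentiable map f : U → E with f(q₀*, q₁*) = q₂*, such that for every (q₀, q₁) ∈ U, f(q₀, q₁) is the unique element q₂ of V satisfying D₁L_d(q₁, q₂) + D₂L_d(q₀, q₁) = 0; hence the discrete Lagrangian flow Υ(q₀, q₁) = (q₁, f(q₀, q₁)) is locally well defined. -/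
/-!
Apply the implicit function theorem to `(q₀, q₁, q₂) ↦ D₁L(q₁, q₂) + D₂L(q₀, q₁)`, solving for `q₂`.
Only the first summand depends on `q₂`, so the partial derivative in `q₂` is
`v ↦ D²L(q₁, q₂)((0, v), (·, 0))`; by the symmetry of the second derivative of a `C²` map this is
the mixed partial `D₁₂L(q₁, q₂)`, and a bijective operator between Banach spaces is invertible.
-/

open ContinuousLinearMap

section Partial

variable {𝕜 : Type*} [NontriviallyNormedField 𝕜]
  {E F G : Type*} [NormedAddCommGroup E] [NormedSpace 𝕜 E] [NormedAddCommGroup F]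
  [NormedSpace 𝕜 F] [NormedAddCommGroup G] [NormedSpace 𝕜 G]

theorem DifferentiableAt.fderiv_comp_prodMk_left {L : E × F → G} {x : E} {y : F}
    (h : DifferentiableAt 𝕜 L (x, y)) :
    fderiv 𝕜 (fun x' => L (x', y)) x = fderiv 𝕜 L (x, y) ∘L inl 𝕜 E F :=
  (h.hasFDerivAt.comp x (hasFDerivAt_prodMk_left x y)).fderiv

theorem DifferentiableAt.fderiv_comp_prodMk_right {L : E × F → G} {x : E} {y : F}
    (h : DifferentiableAt 𝕜 L (x, y)) :
    fderiv 𝕜 (fun y' => L (x, y')) y = fderiv 𝕜 L (x, y) ∘L inr 𝕜 E F :=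
  (h.hasFDerivAt.comp y (hasFDerivAt_prodMk_right x y)).fderiv

end Partial

namespace ContinuousLinearMap

variable {𝕜 : Type*} [NontriviallyNormedField 𝕜]
  {E F : Type*} [NormedAddCommGroup E] [NormedSpace 𝕜 E] [CompleteSpace E]
  [NormedAddCommGroup F] [NormedSpace 𝕜 F] [CompleteSpace F]

theorem isInvertible_of_bijective {f : E →L[𝕜] F} (hf : Function.Bijective f) :
    f.IsInvertible :=
  ⟨.ofBijective f (LinearMap.ker_eq_bot.2 hf.1) (LinearMap.range_eq_top.2 hf.2),
    ContinuousLinearEquiv.coe_ofBijective _ _ _⟩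

end ContinuousLinearMap

section Implicit

variable {𝕜 : Type*} [RCLike 𝕜]
  {E₁ : Type*} [NormedAddCommGroup E₁] [NormedSpace 𝕜 E₁] [CompleteSpace E₁]
  {E₂ : Type*} [NormedAddCommGroup E₂] [NormedSpace 𝕜 E₂] [CompleteSpace E₂]
  {F : Type*} [NormedAddCommGroup F] [NormedSpace 𝕜 F] [CompleteSpace F]

theorem ContDiffAt.exists_isOpen_implicitFunction {f : E₁ × E₂ → F} {u : E₁ × E₂} {n : ℕ}
    (hf : ContDiffAt 𝕜 n f u) (hn : n ≠ 0)
    (hinv : (fderiv 𝕜 f u ∘L inr 𝕜 E₁ E₂).IsInvertible) :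
    ∃ (U : Set E₁) (V : Set E₂) (ψ : E₁ → E₂),
      IsOpen U ∧ IsOpen V ∧ u.1 ∈ U ∧ u.2 ∈ V ∧ ContDiffOn 𝕜 n ψ U ∧ ψ u.1 = u.2 ∧
      ∀ x ∈ U, ψ x ∈ V ∧ f (x, ψ x) = f u ∧ ∀ y ∈ V, f (x, y) = f u → y = ψ x := by
  have hn' : (n : WithTop ℕ∞) ≠ 0 := by exact_mod_cast hn
  set ψ := hf.implicitFunction hn' hinv
  have hψu : ψ u.1 = u.2 := hf.implicitFunction_apply_self hn' hinv
  obtain ⟨W, hW, huW, hψW⟩ := (hf.contDiffAt_implicitFunction hn' hinv).contDiffOn' le_rfl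
    (by simp)
  rw [Set.insert_eq_of_mem (Set.mem_univ _), Set.univ_inter] at hψW
  obtain ⟨S, hS_iff, hS, huS⟩ :=
    mem_nhds_iff.1 (hf.eventually_apply_eq_iff_implicitFunction hn' hinv)
  obtain ⟨U₁, V, hU₁, hV, huU₁, huV, hUV⟩ := isOpen_prod_iff.1 hS u.1 u.2 huS
  have hsolve : ∀ x ∈ U₁, ∀ y ∈ V, f (x, y) = f u ↔ ψ x = y :=
    fun x hx y hy => hS_iff (hUV ⟨hx, hy⟩)
  have hU : IsOpen (W ∩ U₁ ∩ ψ ⁻¹' V) :=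
    (hψW.continuousOn.mono Set.inter_subset_left).isOpen_inter_preimage (hW.inter hU₁) hV
  refine ⟨W ∩ U₁ ∩ ψ ⁻¹' V, V, ψ, hU, hV, ⟨⟨huW, huU₁⟩, ?_⟩, huV,
    hψW.mono fun x hx => hx.1.1, hψu, ?_⟩
  · rwa [Set.mem_preimage, hψu]
  · rintro x ⟨⟨-, hxU₁⟩, hxV⟩
    exact ⟨hxV, (hsolve x hxU₁ _ hxV).2 rfl, fun y hy hxy => ((hsolve x hxU₁ y hy).1 hxy).symm⟩

end Implicit

section DiscreteEulerLagrange

variable {𝕜 : Type*} [NontriviallyNormedField 𝕜]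
  {E G : Type*} [NormedAddCommGroup E] [NormedSpace 𝕜 E] [NormedAddCommGroup G]
  [NormedSpace 𝕜 G]

variable (𝕜) in
noncomputable def discreteEulerLagrange (L : E × E → G) (q : (E × E) × E) : E →L[𝕜] G :=
  fderiv 𝕜 L (q.1.2, q.2) ∘L inl 𝕜 E E + fderiv 𝕜 L q.1 ∘L inr 𝕜 E E

theorem fderiv_add_fderiv_eq_discreteEulerLagrange {L : E × E → G} (hL : Differentiable 𝕜 L)
    (q₀ q₁ q₂ : E) :
    fderiv 𝕜 (fun x => L (x, q₂)) q₁ + fderiv 𝕜 (fun y => L (q₀, y)) q₁ =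
      discreteEulerLagrange 𝕜 L ((q₀, q₁), q₂) := by
  rw [(hL _).fderiv_comp_prodMk_left, (hL _).fderiv_comp_prodMk_right, discreteEulerLagrange]

theorem contDiff_discreteEulerLagrange {L : E × E → G} {m n : WithTop ℕ∞}
    (hL : ContDiff 𝕜 n L) (hmn : m + 1 ≤ n) :
    ContDiff 𝕜 m (discreteEulerLagrange 𝕜 L) := by
  have hD := hL.fderiv_right hmn
  unfold discreteEulerLagrange
  fun_prop

end DiscreteEulerLagrange

section Mixed

variable {𝕜 : Type*} [RCLike 𝕜]
  {E G : Type*} [NormedAddCommGroup E] [NormedSpace 𝕜 E] [NormedAddCommGroup G]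
  [NormedSpace 𝕜 G]

theorem fderiv_discreteEulerLagrange_comp_inr {L : E × E → G} (hL : ContDiff 𝕜 2 L)
    (q : (E × E) × E) :
    fderiv 𝕜 (discreteEulerLagrange 𝕜 L) q ∘L inr 𝕜 (E × E) E =
      (fderiv 𝕜 (fderiv 𝕜 L) (q.1.2, q.2) ∘L inl 𝕜 E E).flip ∘L inr 𝕜 E E := by
  set A := fderiv 𝕜 (fderiv 𝕜 L) (q.1.2, q.2)
  have hD : Differentiable 𝕜 (fderiv 𝕜 L) := (hL.fderiv_right le_rfl).differentiable one_ne_zero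
  have hpartial : HasFDerivAt (fun z => discreteEulerLagrange 𝕜 L (q.1, z))
      ((compL 𝕜 E (E × E) G).flip (inl 𝕜 E E) ∘L A ∘L inr 𝕜 E E) q.2 :=
    (((compL 𝕜 E (E × E) G).flip (inl 𝕜 E E)).hasFDerivAt.comp q.2
      ((hD _).hasFDerivAt.comp q.2 (hasFDerivAt_prodMk_right q.1.2 q.2))).add_const
        (fderiv 𝕜 L q.1 ∘L inr 𝕜 E E)
  have hsymm := hL.contDiffAt.isSymmSndFDerivAt (x := (q.1.2, q.2)) (by simp)
  have hEL : Differentiable 𝕜 (discreteEulerLagrange 𝕜 L) :=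
    (contDiff_discreteEulerLagrange hL le_rfl).differentiable one_ne_zero
  rw [← (hEL q).fderiv_comp_prodMk_right, hpartial.fderiv]
  ext v w
  exact hsymm _ _

end Mixed

/-- **Local existence of the discrete Lagrangian flow.**  If the discrete
Euler–Lagrange equation holds at `(q₀*, q₁*, q₂*)` and the mixed second partial
derivative `D₁₂L_d(q₁*, q₂*) : E → E*` is bijective, then there is a locally
well-defined `C¹` map `f` solving the discrete Euler–Lagrange equation,
i.e. the discrete flow `Υ(q₀,q₁) = (q₁, f(q₀,q₁))` is locally well defined. -/
theorem discrete_lagrangian_flow_locally_well_defined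
    {E : Type*} [NormedAddCommGroup E] [NormedSpace ℝ E] [FiniteDimensional ℝ E]
    (L : E × E → ℝ) (hL : ContDiff ℝ 2 L)
    (q₀' q₁' q₂' : E)
    (hDEL : fderiv ℝ (fun x => L (x, q₂')) q₁'
        + fderiv ℝ (fun y => L (q₀', y)) q₁' = 0)
    (hbij : Function.Bijective
        ⇑(((((fderiv ℝ (fderiv ℝ L) (q₁', q₂')).comp
              (ContinuousLinearMap.inl ℝ E E)).flip).comp
              (ContinuousLinearMap.inr ℝ E E)))) :
    ∃ (U : Set (E × E)) (V : Set E) (f : E × E → E),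
      IsOpen U ∧ IsOpen V ∧ (q₀', q₁') ∈ U ∧ q₂' ∈ V ∧
      ContDiffOn ℝ 1 f U ∧ f (q₀', q₁') = q₂' ∧
      ∀ p ∈ U, f p ∈ V ∧
        (fderiv ℝ (fun x => L (x, f p)) p.2 + fderiv ℝ (fun y => L (p.1, y)) p.2 = 0) ∧
        ∀ z ∈ V, fderiv ℝ (fun x => L (x, z)) p.2 + fderiv ℝ (fun y => L (p.1, y)) p.2 = 0
          → z = f p := by
  have hinv : (fderiv ℝ (discreteEulerLagrange ℝ L) ((q₀', q₁'), q₂') ∘L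
      inr ℝ (E × E) E).IsInvertible := by
    rw [fderiv_discreteEulerLagrange_comp_inr hL]
    exact isInvertible_of_bijective hbij
  have hEL := fderiv_add_fderiv_eq_discreteEulerLagrange (hL.differentiable two_ne_zero)
  rw [hEL] at hDEL
  have hC1 : ContDiffAt ℝ 1 (discreteEulerLagrange ℝ L) ((q₀', q₁'), q₂') :=
    (contDiff_discreteEulerLagrange hL le_rfl).contDiffAt
  obtain ⟨U, V, f, hU, hV, hqU, hqV, hf, hfq, hsolve⟩ :=
    hC1.exists_isOpen_implicitFunction one_ne_zero hinv
  rw [hDEL] at hsolve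
  refine ⟨U, V, f, hU, hV, hqU, hqV, hf, hfq, fun p hp => ?_⟩
  simpa only [hEL] using hsolve p hp
end

section
/- Let E be a finite-dimensional real normed vector space, L_d : E × E → ℝ differentiable, and ξ : E → E a continuous linear endomorphism such that L_d(exp(tξ)(q₀), exp(tξ)(q₁)) = L_d(q₀, q₁) for all t ∈ ℝ and all q₀, q₁ ∈ E. If q_{k-1}, q_k, q_{k+1} ∈ E satisfy the discrete Euler–Lagrange equation D₁L_d(q_k, q_{k+1}) + D₂L_d(q_{k-1}, q_k) = 0, then the discrete momentum J(q₀, q₁) := D₂L_d(q₀, q₁)(ξ(q₁)) is preserved along the discrete trajectory: J(q_{k-1}, q_k) = J(q_k, q_{k+1}). -/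
/-! Differentiating the invariance `L (exp (tξ) q₀, exp (tξ) q₁) = L (q₀, q₁)` at `t = 0` gives
`D₁L(q₀, q₁)(ξ q₀) + D₂L(q₀, q₁)(ξ q₁) = 0`. Applied at `(q_k, q_{k+1})`, and combined with the
discrete Euler–Lagrange equation evaluated at `ξ q_k`, which trades `D₁L(q_k, q_{k+1})(ξ q_k)`
for `-D₂L(q_{k-1}, q_k)(ξ q_k)`, this is exactly the conservation of `J`. -/

open NormedSpace

theorem hasDerivAt_exp_smul_apply_zero {𝕂 E : Type*} [RCLike 𝕂] [NormedAddCommGroup E]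
    [NormedSpace 𝕂 E] [CompleteSpace E] (A : E →L[𝕂] E) (q : E) :
    HasDerivAt (fun t : 𝕂 => exp (t • A) q) (A q) 0 := by
  simpa using (hasDerivAt_exp_smul_const A (0 : 𝕂)).clm_apply (hasDerivAt_const (0 : 𝕂) q)

section Partials

variable {𝕜 E F G : Type*} [NontriviallyNormedField 𝕜] [NormedAddCommGroup E] [NormedSpace 𝕜 E]
  [NormedAddCommGroup F] [NormedSpace 𝕜 F] [NormedAddCommGroup G] [NormedSpace 𝕜 G]
  {L : E × F → G} {x : E} {y : F}

theorem DifferentiableAt.fderiv_apply_eq_fderiv_partial_add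
    (hL : DifferentiableAt 𝕜 L (x, y)) (v : E) (w : F) :
    fderiv 𝕜 L (x, y) (v, w)
      = fderiv 𝕜 (fun x' => L (x', y)) x v + fderiv 𝕜 (fun y' => L (x, y')) y w := by
  have hleft : fderiv 𝕜 (fun x' => L (x', y)) x = (fderiv 𝕜 L (x, y)).comp (.inl 𝕜 E F) :=
    (hL.hasFDerivAt.comp x (hasFDerivAt_prodMk_left x y)).fderiv
  have hright : fderiv 𝕜 (fun y' => L (x, y')) y = (fderiv 𝕜 L (x, y)).comp (.inr 𝕜 E F) :=
    (hL.hasFDerivAt.comp y (hasFDerivAt_prodMk_right x y)).fderiv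
  rw [hleft, hright]
  exact ((fderiv 𝕜 L (x, y)).comp_inl_add_comp_inr (v, w)).symm

end Partials

theorem fderiv_apply_eq_zero_of_forall_comp_eq {𝕜 E F : Type*} [NontriviallyNormedField 𝕜]
    [NormedAddCommGroup E] [NormedSpace 𝕜 E] [NormedAddCommGroup F] [NormedSpace 𝕜 F]
    {L : E → F} {γ : 𝕜 → E} {v : E} {t : 𝕜} (hL : DifferentiableAt 𝕜 L (γ t))
    (hγ : HasDerivAt γ v t) (hconst : ∀ s, L (γ s) = L (γ t)) :
    fderiv 𝕜 L (γ t) v = 0 := by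
  have hcomp : HasDerivAt (L ∘ γ) (fderiv 𝕜 L (γ t) v) t := hL.hasFDerivAt.comp_hasDerivAt t hγ
  rw [show L ∘ γ = fun _ => L (γ t) from funext hconst] at hcomp
  exact hcomp.unique (hasDerivAt_const t _)

theorem fderiv_apply_generator_eq_zero_of_exp_invariant {E : Type*} [NormedAddCommGroup E]
    [NormedSpace ℝ E] [CompleteSpace E] {L : E × E → ℝ} {ξ : E →L[ℝ] E}
    (hinv : ∀ (t : ℝ) (q₀ q₁ : E), L (exp (t • ξ) q₀, exp (t • ξ) q₁) = L (q₀, q₁))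
    {q₀ q₁ : E} (hL : DifferentiableAt ℝ L (q₀, q₁)) :
    fderiv ℝ L (q₀, q₁) (ξ q₀, ξ q₁) = 0 := by
  have horbit : (fun t : ℝ => (exp (t • ξ) q₀, exp (t • ξ) q₁)) 0 = (q₀, q₁) := by simp
  rw [← horbit] at hL ⊢
  refine fderiv_apply_eq_zero_of_forall_comp_eq hL
    ((hasDerivAt_exp_smul_apply_zero ξ q₀).prodMk (hasDerivAt_exp_smul_apply_zero ξ q₁)) ?_
  intro s
  simp only [hinv, horbit]

/-- **Discrete Noether theorem: momentum preservation.**  If the discrete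
Lagrangian is invariant under the one-parameter group `exp(tξ)` and
`(q_{k-1}, q_k, q_{k+1})` satisfies the discrete Euler–Lagrange equation, then
the discrete momentum `J(q₀,q₁) = D₂L_d(q₀,q₁)(ξ q₁)` is preserved. -/
theorem discrete_noether_momentum_preservation
    {E : Type*} [NormedAddCommGroup E] [NormedSpace ℝ E] [FiniteDimensional ℝ E]
    (L : E × E → ℝ) (hL : Differentiable ℝ L)
    (ξ : E →L[ℝ] E)
    (hinv : ∀ (t : ℝ) (q₀ q₁ : E),
      L (NormedSpace.exp (t • ξ) q₀, NormedSpace.exp (t • ξ) q₁) = L (q₀, q₁))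
    (qkm qk qkp : E)
    (hDEL : fderiv ℝ (fun x => L (x, qkp)) qk
        + fderiv ℝ (fun y => L (qkm, y)) qk = 0) :
    fderiv ℝ (fun y => L (qkm, y)) qk (ξ qk)
      = fderiv ℝ (fun y => L (qk, y)) qkp (ξ qkp) := by
  have hnoether := fderiv_apply_generator_eq_zero_of_exp_invariant hinv (hL (qk, qkp))
  rw [(hL (qk, qkp)).fderiv_apply_eq_fderiv_partial_add] at hnoether
  have hDEL_ξ := DFunLike.congr_fun hDEL (ξ qk)
  rw [add_apply, zero_apply] at hDEL_ξ
  linarith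
end
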